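/- arXiv:1906.06314 — 4 statements merged into one kernel-verified Lean document; each statement's English description precedes it below -/
import Mathlib

section
/- Let d ≥ 2, let p, p' ∈ ℝ^d, and let l_j ≤ h_j be real numbers for j = 1, …, d−1. If S(p)_r ≤ S(p')_r holds for every ratio vector r = (r[1], …, r[d−1]) with each r[j] ∈ {l_j, h_j} (the 2^{d−1} corner vectors), then S(p)_r ≤ S(p')_r holds for every ratio vector r with r[j] ∈ [l_j, h_j] for all j. (Theorem 2: checking the 2^{d−1} boundary domination vectors suffices in d-dimensional space.) -/
/-- The weighted sum `S(p)_r = sum_{j<d-1} r[j]*p[j] + p[d-1]` of a point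
`p` in `R^d` for a ratio vector `r` in `R^(d-1)`, with `d = m + 1`. -/
noncomputable def wsum {m : ℕ} (p : Fin (m + 1) → ℝ) (r : Fin m → ℝ) : ℝ :=
  (∑ j : Fin m, r j * p j.castSucc) + p (Fin.last m)

lemma wsum_update {m : ℕ} (p : Fin (m + 1) → ℝ) (r : Fin m → ℝ) (a : Fin m) (t : ℝ) :
    wsum p (Function.update r a t) = wsum p r + (t - r a) * p a.castSucc := by
  unfold wsum
  have h1 : ∑ j : Fin m, (Function.update r a t j * p j.castSucc - r j * p j.castSucc)
      = (t - r a) * p a.castSucc := by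
    rw [Finset.sum_eq_single a]
    · simp; ring
    · intro b _ hb; simp [Function.update_of_ne hb]
    · simp
  rw [Finset.sum_sub_distrib] at h1
  linarith

/-- Theorem 2: checking the 2^(d-1) boundary domination vectors suffices in
d-dimensional space. -/
theorem boundary_check_high_dim (m : ℕ) (hm : 1 ≤ m)
    (p p' : Fin (m + 1) → ℝ) (l h : Fin m → ℝ) (hlh : ∀ j, l j ≤ h j)
    (hcorner : ∀ r : Fin m → ℝ, (∀ j, r j = l j ∨ r j = h j) → wsum p r ≤ wsum p' r) :
    ∀ r : Fin m → ℝ, (∀ j, r j ∈ Set.Icc (l j) (h j)) → wsum p r ≤ wsum p' r := by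
  have key : ∀ s : Finset (Fin m), ∀ r : Fin m → ℝ,
      (∀ j, r j ∈ Set.Icc (l j) (h j)) →
      (∀ j, j ∉ s → r j = l j ∨ r j = h j) →
      wsum p r ≤ wsum p' r := by
    intro s
    induction s using Finset.induction with
    | empty =>
      intro r _ hc
      exact hcorner r fun j => hc j (by simp)
    | @insert a s ha ih =>
      intro r hr hc
      have hbox : ∀ t, t ∈ Set.Icc (l a) (h a) →
          ∀ j, Function.update r a t j ∈ Set.Icc (l j) (h j) := by
        intro t ht j
        by_cases hj : j = a
        · subst hj; simpa using ht
        · simpa [Function.update_of_ne hj] using hr j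
      have hcor : ∀ t, (t = l a ∨ t = h a) →
          ∀ j, j ∉ s → Function.update r a t j = l j ∨ Function.update r a t j = h j := by
        intro t ht j hj
        by_cases hja : j = a
        · subst hja; simpa using ht
        · rw [Function.update_of_ne hja]
          exact hc j (by simp [hja, hj])
      have hl := ih (Function.update r a (l a))
        (hbox _ ⟨le_refl _, hlh a⟩) (hcor _ (Or.inl rfl))
      have hh := ih (Function.update r a (h a))
        (hbox _ ⟨hlh a, le_refl _⟩) (hcor _ (Or.inr rfl))
      rw [wsum_update, wsum_update] at hl hh
      obtain ⟨h1, h2⟩ := hr a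
      rcases le_or_gt (p a.castSucc) (p' a.castSucc) with hc0 | hc0
      · nlinarith [mul_nonneg (sub_nonneg.2 h1) (sub_nonneg.2 hc0)]
      · nlinarith [mul_nonneg (sub_nonneg.2 h2) (sub_nonneg.2 hc0.le)]
  intro r hr
  exact key Finset.univ r hr (by simp)
end

section
/- Let 0 ≤ l ≤ h with h > 0, and for a point p ∈ ℝ² define its mapped point c ∈ ℝ² by c[1] = p[1] + p[2]/h and c[2] = l·p[1] + p[2]. Then for any two distinct points p, p' ∈ ℝ² with mapped points c, c': p eclipse-dominates p' with respect to [l, h] if and only if c[1] ≤ c'[1] and c[2] ≤ c'[2]. (Theorem 4: the two-dimensional eclipse problem transforms to the skyline problem via the intercept mapping.) -/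
open Set

/-- The set where the inequality holds is a half-line, hence convex. -/
theorem forall_mem_Icc_mul_add_le_iff {𝕜 : Type*} [Field 𝕜] [LinearOrder 𝕜] [IsStrictOrderedRing 𝕜]
    {l h : 𝕜} (hlh : l ≤ h) (a b c d : 𝕜) :
    (∀ r ∈ Icc l h, r * a + b ≤ r * c + d) ↔ l * a + b ≤ l * c + d ∧ h * a + b ≤ h * c + d := by
  refine ⟨fun hall => ⟨hall l (left_mem_Icc.2 hlh), hall h (right_mem_Icc.2 hlh)⟩, ?_⟩
  rintro ⟨hl, hh⟩
  have hS : Convex 𝕜 {r : 𝕜 | r • (a - c) ≤ d - b} :=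
    convex_halfSpace_le (IsLinearMap.isLinearMap_smul' _) _
  have mem_iff (r : 𝕜) : r ∈ {r : 𝕜 | r • (a - c) ≤ d - b} ↔ r * a + b ≤ r * c + d := by
    rw [mem_ofPred_eq, smul_eq_mul, mul_sub, sub_le_sub_iff, add_comm d]
  intro r hr
  rw [← segment_eq_Icc hlh] at hr
  exact (mem_iff r).1 (hS.segment_subset ((mem_iff l).2 hl) ((mem_iff h).2 hh) hr)

theorem add_div_le_add_div_iff_mul_add_le_mul_add {𝕜 : Type*} [Field 𝕜] [LinearOrder 𝕜]
    [IsStrictOrderedRing 𝕜] {h : 𝕜} (hh : 0 < h) (a b c d : 𝕜) :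
    a + b / h ≤ c + d / h ↔ h * a + b ≤ h * c + d := by
  have hmul (x y : 𝕜) : h * (x + y / h) = h * x + y := by
    rw [mul_add, mul_div_cancel₀ _ hh.ne']
  rw [← mul_le_mul_iff_right₀ hh, hmul, hmul]

theorem eclipse_iff_mapped_skyline_two_dim_general (l h : ℝ) (hlh : l ≤ h)
    (hh : 0 < h) (p p' : ℝ × ℝ) (hne : p ≠ p') :
    (p ≠ p' ∧ ∀ r ∈ Set.Icc l h, r * p.1 + p.2 ≤ r * p'.1 + p'.2) ↔
      (p.1 + p.2 / h ≤ p'.1 + p'.2 / h ∧ l * p.1 + p.2 ≤ l * p'.1 + p'.2) := by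
  rw [and_iff_right hne, forall_mem_Icc_mul_add_le_iff hlh,
    add_div_le_add_div_iff_mul_add_le_mul_add hh, and_comm]

/-- Theorem 4: the two-dimensional eclipse problem transforms to the skyline
problem via the intercept mapping `c = (p₁ + p₂/h, l·p₁ + p₂)`. -/
theorem eclipse_iff_mapped_skyline_two_dim (l h : ℝ) (h0l : 0 ≤ l) (hlh : l ≤ h)
    (hh : 0 < h) (p p' : ℝ × ℝ) (hne : p ≠ p') :
    (p ≠ p' ∧ ∀ r ∈ Set.Icc l h, r * p.1 + p.2 ≤ r * p'.1 + p'.2) ↔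
      (p.1 + p.2 / h ≤ p'.1 + p'.2 / h ∧ l * p.1 + p.2 ≤ l * p'.1 + p'.2) :=
  eclipse_iff_mapped_skyline_two_dim_general l h hlh hh p p' hne
end

section
/- Let 0 ≤ l < h, let p₁, …, p_n ∈ ℝ² be pairwise distinct points, and define c_i ∈ ℝ² by c_i[1] = p_i[1] + p_i[2]/h and c_i[2] = l·p_i[1] + p_i[2]. Then for every index i, the point p_i is an eclipse point of {p₁, …, p_n} with respect to [l, h] if and only if c_i is a skyline point of {c₁, …, c_n}, i.e., there is no j ≠ i with c_j[1] ≤ c_i[1] and c_j[2] ≤ c_i[2]. (Set form of Theorem 4: the eclipse points of the dataset equal the corresponding skyline points of the mapped dataset.) -/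
/-- Set form of Theorem 4: the eclipse points of the dataset equal the
corresponding skyline points of the mapped dataset. -/
theorem eclipse_points_eq_mapped_skyline_points (n : ℕ) (l h : ℝ)
    (h0l : 0 ≤ l) (hlh : l < h)
    (p : Fin n → ℝ × ℝ) (hdist : Function.Injective p)
    (c : Fin n → ℝ × ℝ)
    (hc : ∀ i, c i = ((p i).1 + (p i).2 / h, l * (p i).1 + (p i).2)) :
    ∀ i : Fin n,
      (¬ ∃ j : Fin n, j ≠ i ∧ p j ≠ p i ∧
          ∀ r ∈ Set.Icc l h, r * (p j).1 + (p j).2 ≤ r * (p i).1 + (p i).2) ↔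
      (¬ ∃ j : Fin n, j ≠ i ∧ (c j).1 ≤ (c i).1 ∧ (c j).2 ≤ (c i).2) := by
  have hh0 : 0 < h := lt_of_le_of_lt h0l hlh
  have e1 : ∀ k, (c k).1 = (h * (p k).1 + (p k).2) / h := by
    intro k; rw [hc]; field_simp
  have e2 : ∀ k, (c k).2 = l * (p k).1 + (p k).2 := by
    intro k; rw [hc]
  intro i
  rw [not_iff_not]
  constructor
  · rintro ⟨j, hji, -, hall⟩
    refine ⟨j, hji, ?_, ?_⟩
    · rw [e1 j, e1 i, div_le_div_iff_of_pos_right hh0]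
      exact hall h ⟨hlh.le, le_refl h⟩
    · rw [e2 j, e2 i]
      exact hall l ⟨le_refl l, hlh.le⟩
  · rintro ⟨j, hji, h1, h2⟩
    have hH : h * (p j).1 + (p j).2 ≤ h * (p i).1 + (p i).2 := by
      rw [e1 j, e1 i, div_le_div_iff_of_pos_right hh0] at h1
      exact h1
    have hL : l * (p j).1 + (p j).2 ≤ l * (p i).1 + (p i).2 := by
      rw [e2 j, e2 i] at h2; exact h2
    refine ⟨j, hji, fun e => hji (hdist e), fun r hr => ?_⟩
    obtain ⟨hrl, hrh⟩ := hr
    nlinarith [mul_nonneg (sub_nonneg.2 hrl) (sub_nonneg.2 (sub_nonneg.2 hH)),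
      mul_le_mul_of_nonneg_left hL (sub_nonneg.2 hrh),
      mul_le_mul_of_nonneg_left hH (sub_nonneg.2 hrl)]
end

section
/- Let d ≥ 2 and let 0 ≤ l_j ≤ h_j with h_j > 0 for j = 1, …, d−1. For p ∈ ℝ^d define its mapped point c ∈ ℝ^d by c[d] = Σ_{j=1}^{d−1} l_j·p[j] + p[d] and, for j = 1, …, d−1, c[j] = (p[d] + h_j·p[j] + Σ_{k=1, k≠j}^{d−1} l_k·p[k]) / h_j. Then for any two points p, p' ∈ ℝ^d with mapped points c, c': if p eclipse-dominates p' with respect to the ranges [l_j, h_j], then c[j] ≤ c'[j] for every j = 1, …, d. (Forward direction of Theorem 6: eclipse-dominance implies componentwise dominance of the mapped points.) -/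
/-- `p` eclipse-dominates `q` w.r.t. the ranges `[l j, h j]`. -/
def eclipseDom {m : ℕ} (l h : Fin m → ℝ) (p q : Fin (m + 1) → ℝ) : Prop :=
  p ≠ q ∧ ∀ r : Fin m → ℝ, (∀ j, r j ∈ Set.Icc (l j) (h j)) → wsum p r ≤ wsum q r

/-- The last coordinate `c[d]` of the mapped point of `p`. -/
noncomputable def cLast {m : ℕ} (l : Fin m → ℝ) (p : Fin (m + 1) → ℝ) : ℝ :=
  (∑ k : Fin m, l k * p k.castSucc) + p (Fin.last m)

/-- The `j`-th coordinate (`j < d - 1`) of the mapped point of `p`. -/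
noncomputable def cCoord {m : ℕ} (l h : Fin m → ℝ) (p : Fin (m + 1) → ℝ) (j : Fin m) : ℝ :=
  (p (Fin.last m) + h j * p j.castSucc +
    ∑ k ∈ Finset.univ.erase j, l k * p k.castSucc) / h j

/-- Forward direction of Theorem 6: eclipse-dominance implies componentwise
dominance of the mapped points. -/
theorem eclipseDom_imp_mapped_le (m : ℕ) (hm : 1 ≤ m) (l h : Fin m → ℝ)
    (hl : ∀ j, 0 ≤ l j) (hlh : ∀ j, l j ≤ h j) (hh : ∀ j, 0 < h j)
    (p p' : Fin (m + 1) → ℝ) (hdom : eclipseDom l h p p') :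
    (∀ j : Fin m, cCoord l h p j ≤ cCoord l h p' j) ∧ cLast l p ≤ cLast l p' := by
  obtain ⟨-, hd⟩ := hdom
  constructor
  · intro j
    have key := hd (Function.update l j (h j)) ?_
    · have ej : ∀ q : Fin (m+1) → ℝ, wsum q (Function.update l j (h j)) =
          q (Fin.last m) + h j * q j.castSucc +
          ∑ k ∈ Finset.univ.erase j, l k * q k.castSucc := by
        intro q
        rw [wsum, ← Finset.add_sum_erase _ _ (Finset.mem_univ j),
          Function.update_self]
        have : ∀ k ∈ Finset.univ.erase j,
            Function.update l j (h j) k * q k.castSucc = l k * q k.castSucc := by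
          intro k hk
          rw [Function.update_of_ne (Finset.ne_of_mem_erase hk)]
        rw [Finset.sum_congr rfl this]; ring
      rw [ej, ej] at key
      exact div_le_div_of_nonneg_right key (hh j).le |>.trans_eq rfl
    · intro k
      by_cases hk : k = j
      · subst hk; simp [Set.mem_Icc, hlh k]
      · simp [Function.update_of_ne hk, Set.mem_Icc, hlh k]
  · have key := hd l (fun k => ⟨le_refl _, hlh k⟩)
    exact key
end
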